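/- arXiv:1904.13340 — 2 statements merged into one kernel-verified Lean document; each statement's English description precedes it below -/
import Mathlib

section
/- In the algebra U^ȷ(sl₃), for every natural number n one has f·e^{(n+1)} = e^{(n)}·( f·e − v·e·f − [n]·(v^n·k + v^{-n}·k^{-1}) ) + v^{n+1}·e^{(n+1)}·f, where e^{(n)} = e^n/[n]! denotes the divided power. -/
noncomputable def v : RatFunc ℚ := RatFunc.X

noncomputable def qint (m : ℤ) : RatFunc ℚ := (v ^ m - v ^ (-m)) / (v - v⁻¹)

noncomputable def qfact (n : ℕ) : RatFunc ℚ := ∏ i ∈ Finset.range n, qint (i + 1)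

/-!
Write `X = f e - v e f` and `K m = v^m k + v^(-m) k⁻¹` (`cartanSum`). The Serre relation for `e`
says exactly that `X e = v⁻¹ e X - [2] e K 1`, and `k e = v³ e k` gives `K m e = e K (m + 3)`.
Pushing `e` through `f e^(n+1) = [n+1] e^n (X - [n] K n) + v^(n+1) e^(n+1) f` from the right
proves this identity by induction; the coefficients match by `[n+2] = v⁻¹ [n+1] + v^(n+1)` and
`[2] K 1 + [n] K (n+3) = [n+2] K (n+1)`, both instances of `[a+b] = v^(-b) [a] + v^a [b]`.
Dividing by `[n+1]!` gives the statement for divided powers.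
-/

open Finset

section QuantumNumbers

variable {K : Type*} [Field K] {w : K}

def qnum (w : K) (m : ℤ) : K := (w ^ m - w ^ (-m)) / (w - w⁻¹)

lemma ne_zero_of_sub_inv_ne_zero (hw : w - w⁻¹ ≠ 0) : w ≠ 0 := by
  rintro rfl
  simp at hw

lemma sub_inv_ne_zero {x : K} (hx : x ≠ 0) (h : x ^ 2 ≠ 1) : x - x⁻¹ ≠ 0 := by
  rw [sub_ne_zero]
  contrapose! h
  rw [sq]
  nth_rw 2 [h]
  exact mul_inv_cancel₀ hx

lemma qnum_natCast_ne_zero (hw : w - w⁻¹ ≠ 0) {m : ℕ} (h : w ^ (2 * m) ≠ 1) : qnum w m ≠ 0 := by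
  have hw0 := ne_zero_of_sub_inv_ne_zero hw
  refine div_ne_zero ?_ hw
  rw [zpow_neg, zpow_natCast]
  exact sub_inv_ne_zero (pow_ne_zero m hw0) (by rwa [← pow_mul, mul_comm])

@[simp] lemma qnum_zero (w : K) : qnum w 0 = 0 := by simp [qnum]

lemma qnum_one (hw : w - w⁻¹ ≠ 0) : qnum w 1 = 1 := by
  simp [qnum, div_self hw]

lemma qnum_two (hw : w - w⁻¹ ≠ 0) : qnum w 2 = w + w⁻¹ := by
  have := ne_zero_of_sub_inv_ne_zero hw
  rw [qnum, div_eq_iff hw]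
  simp only [zpow_neg, zpow_ofNat]
  ring

lemma qnum_add (hw : w - w⁻¹ ≠ 0) (a b : ℤ) :
    qnum w (a + b) = w ^ (-b) * qnum w a + w ^ a * qnum w b := by
  have := ne_zero_of_sub_inv_ne_zero hw
  simp only [qnum, zpow_add₀ this, zpow_neg, neg_add]
  field_simp
  ring

end QuantumNumbers

section Relations

variable {K : Type*} [Field K] {A : Type*} [Ring A] [Algebra K A]

def cartanSum (w : K) (k k' : A) (m : ℤ) : A := w ^ m • k + w ^ (-m) • k'

lemma mul_eq_inv_smul_of_mul_eq_smul {c : K} (hc : c ≠ 0) {k k' e : A}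
    (hkk' : k * k' = 1) (hk'k : k' * k = 1) (hke : k * e = c • (e * k)) :
    k' * e = c⁻¹ • (e * k') := by
  have h : e * k' = c • (k' * e) := by
    calc e * k' = k' * (k * e) * k' := by rw [← mul_assoc, hk'k, one_mul]
      _ = c • (k' * e) := by
        rw [hke, mul_smul_comm, smul_mul_assoc, ← mul_assoc, mul_assoc _ k, hkk', mul_one]
  rw [h, smul_smul, inv_mul_cancel₀ hc, one_smul]

variable {w : K} {e f k k' : A}

lemma cartanSum_mul {d : ℕ} (hw : w ≠ 0) (hke : k * e = w ^ d • (e * k))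
    (hk'e : k' * e = (w ^ d)⁻¹ • (e * k')) (m : ℤ) :
    cartanSum w k k' m * e = e * cartanSum w k k' (m + d) := by
  simp only [cartanSum, add_mul, smul_mul_assoc, hke, hk'e, mul_add, mul_smul_comm, smul_smul,
    neg_add, zpow_add₀ hw, zpow_neg, zpow_natCast]

lemma qnum_smul_cartanSum_add (hw : w - w⁻¹ ≠ 0) (a b m : ℤ) :
    qnum w a • cartanSum w k k' (m - b) + qnum w b • cartanSum w k k' (m + a)
      = qnum w (a + b) • cartanSum w k k' m := by
  have hw0 := ne_zero_of_sub_inv_ne_zero hw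
  simp only [cartanSum, qnum, smul_add, smul_smul, neg_add, sub_eq_add_neg,
    zpow_add₀ hw0, zpow_neg]
  match_scalars <;> field_simp <;> ring

lemma fe_sub_smul_ef_mul (hw : w - w⁻¹ ≠ 0)
    (hserre : e ^ 2 * f - qnum w 2 • (e * f * e) + f * e ^ 2
      = -(qnum w 2) • (e * cartanSum w k k' 1)) :
    (f * e - w • (e * f)) * e
      = w⁻¹ • (e * (f * e - w • (e * f))) - qnum w 2 • (e * cartanSum w k k' 1) := by
  have hw0 := ne_zero_of_sub_inv_ne_zero hw
  rw [qnum_two hw] at hserre ⊢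
  simp only [sq, sub_mul, mul_sub, smul_mul_assoc, mul_smul_comm, mul_assoc] at hserre ⊢
  linear_combination (norm := module) hserre + inv_mul_cancel₀ hw0 • (e * (e * f))

theorem mul_pow_succ_eq_of_serre (hw : w - w⁻¹ ≠ 0) (hke : k * e = w ^ 3 • (e * k))
    (hk'e : k' * e = (w ^ 3)⁻¹ • (e * k'))
    (hserre : e ^ 2 * f - qnum w 2 • (e * f * e) + f * e ^ 2
      = -(qnum w 2) • (e * cartanSum w k k' 1)) (n : ℕ) :
    f * e ^ (n + 1)
      = qnum w (n + 1) • (e ^ n * (f * e - w • (e * f) - qnum w n • cartanSum w k k' n))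
        + w ^ (n + 1) • (e ^ (n + 1) * f) := by
  have hw0 := ne_zero_of_sub_inv_ne_zero hw
  have hXe := fe_sub_smul_ef_mul hw hserre
  set X := f * e - w • (e * f) with hX
  have hfe : f * e = X + w • (e * f) := by rw [hX, sub_add_cancel]
  induction n with
  | zero => simp [qnum_one hw, hfe]
  | succ n ih =>
    have hq : qnum w (n + 1 + 1) = w⁻¹ * qnum w (n + 1) + w ^ (n + 1) := by
      rw [qnum_add hw, qnum_one hw, zpow_neg_one, mul_one]
      norm_cast
    have hqK : qnum w 2 • cartanSum w k k' 1 + qnum w n • cartanSum w k k' (n + 3)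
        = qnum w (n + 1 + 1) • cartanSum w k k' (n + 1) := by
      convert qnum_smul_cartanSum_add hw 2 n (n + 1) using 3 <;> ring_nf
    have hqK' := congrArg (fun x => qnum w (n + 1) • (e ^ (n + 1) * x)) hqK
    rw [pow_succ e (n + 1), ← mul_assoc, ih, add_mul, smul_mul_assoc, smul_mul_assoc, mul_assoc,
      sub_mul, smul_mul_assoc, cartanSum_mul hw0 hke hk'e, mul_assoc, hXe, hfe]
    push_cast
    simp only [mul_add, mul_sub, mul_smul_comm, smul_add, smul_sub, smul_smul, ← mul_assoc,
      ← pow_succ] at hqK' ⊢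
    rw [hq] at hqK' ⊢
    linear_combination (norm := module) -hqK'

def qfactorial (w : K) (n : ℕ) : K := ∏ i ∈ range n, qnum w (i + 1)

theorem mul_dividedPow_succ_eq_of_serre (hw : w - w⁻¹ ≠ 0) (hke : k * e = w ^ 3 • (e * k))
    (hk'e : k' * e = (w ^ 3)⁻¹ • (e * k'))
    (hserre : e ^ 2 * f - qnum w 2 • (e * f * e) + f * e ^ 2
      = -(qnum w 2) • (e * cartanSum w k k' 1)) {n : ℕ} (hn : qnum w (n + 1) ≠ 0) :
    f * ((qfactorial w (n + 1))⁻¹ • e ^ (n + 1))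
      = (qfactorial w n)⁻¹ • e ^ n * (f * e - w • (e * f) - qnum w n • cartanSum w k k' n)
        + w ^ (n + 1) • ((qfactorial w (n + 1))⁻¹ • e ^ (n + 1) * f) := by
  rw [mul_smul_comm, mul_pow_succ_eq_of_serre hw hke hk'e hserre, qfactorial, prod_range_succ,
    ← qfactorial, smul_add, smul_smul, mul_inv, mul_assoc, inv_mul_cancel₀ hn, mul_one,
    smul_mul_assoc, smul_mul_assoc, smul_comm]

end Relations

lemma v_pow_ne_one {m : ℕ} (hm : m ≠ 0) : v ^ m ≠ 1 := by
  intro h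
  have hdeg := congrArg RatFunc.intDegree h
  rw [v, ← RatFunc.algebraMap_X, ← map_pow, RatFunc.intDegree_polynomial,
    Polynomial.natDegree_X_pow, RatFunc.intDegree_one] at hdeg
  omega

theorem lemma_a_general
    (A : Type*) [Ring A] [Algebra (RatFunc ℚ) A]
    (e f k k' : A)
    (hkk' : k * k' = 1) (hk'k : k' * k = 1)
    (hke : k * e = (v ^ 3) • (e * k))
    (hserre_e : e ^ 2 * f - qint 2 • (e * f * e) + f * e ^ 2
      = -(qint 2) • (e * (v • k + v⁻¹ • k')))
    (ep : ℕ → A) (hep : ∀ n, ep n = (qfact n)⁻¹ • e ^ n) :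
    ∀ n : ℕ,
      f * ep (n + 1)
        = ep n * (f * e - v • (e * f)
            - qint n • ((v ^ (n : ℤ)) • k + (v ^ (-(n : ℤ))) • k'))
          + (v ^ (n + 1)) • (ep (n + 1) * f) := by
  intro n
  have hv0 : v ≠ 0 := RatFunc.X_ne_zero
  have hv : v - v⁻¹ ≠ 0 := sub_inv_ne_zero hv0 (v_pow_ne_one two_ne_zero)
  have hn : qint (n + 1) ≠ 0 := by
    exact_mod_cast qnum_natCast_ne_zero hv (m := n + 1) (v_pow_ne_one (by omega))
  have hk'e := mul_eq_inv_smul_of_mul_eq_smul (pow_ne_zero 3 hv0) hkk' hk'k hke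
  have hserre : e ^ 2 * f - qint 2 • (e * f * e) + f * e ^ 2
      = -(qint 2) • (e * cartanSum v k k' 1) := by
    simpa [cartanSum] using hserre_e
  simp only [hep]
  exact mul_dividedPow_succ_eq_of_serre hv hke hk'e hserre hn

/-- Lemma `a`: in `U^ȷ(sl₃)` (any algebra with its defining relations),
`f e^{(n+1)} = e^{(n)} (fe - v ef - [n](vⁿ k + v⁻ⁿ k⁻¹)) + v^{n+1} e^{(n+1)} f`. -/
theorem lemma_a
    (A : Type*) [Ring A] [Algebra (RatFunc ℚ) A]
    (e f k k' : A)
    (hkk' : k * k' = 1) (hk'k : k' * k = 1)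
    (hke : k * e = (v ^ 3) • (e * k))
    (hkf : k * f = (v ^ (-3 : ℤ)) • (f * k))
    (hserre_e : e ^ 2 * f - qint 2 • (e * f * e) + f * e ^ 2
      = -(qint 2) • (e * (v • k + v⁻¹ • k')))
    (hserre_f : f ^ 2 * e - qint 2 • (f * e * f) + e * f ^ 2
      = -(qint 2) • ((v • k + v⁻¹ • k') * f))
    (ep : ℕ → A) (hep : ∀ n, ep n = (qfact n)⁻¹ • e ^ n) :
    ∀ n : ℕ,
      f * ep (n + 1)
        = ep n * (f * e - v • (e * f)
            - qint n • ((v ^ (n : ℤ)) • k + (v ^ (-(n : ℤ))) • k'))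
          + (v ^ (n + 1)) • (ep (n + 1) * f) :=
  lemma_a_general A e f k k' hkk' hk'k hke hserre_e ep hep
end

section
/- Define P_{0,d}(t) = ∏_{i=0}^{d−1}(t + [d−1−2i]) / [d]! and P_{1,d+1}(t) = t·∏_{i=0}^{d−1}(t + [d−1−2i]) / [d+1]! in ℚ(v)[t]. Then for all d ∈ ℕ, the multiplication rule t·P_{1,d+1}(t) = [d+2]·P_{0,d+2}(t) + [d+1]·P_{0,d}(t) holds. -/
open Polynomial

/-- `P_{0,d}(t) = ∏_{i=0}^{d-1}(t + [d-1-2i]) / [d]!`. -/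
noncomputable def P0 (d : ℕ) : Polynomial (RatFunc ℚ) :=
  C (qfact d)⁻¹ * ∏ i ∈ Finset.range d, (X + C (qint ((d : ℤ) - 1 - 2 * i)))

/-- `P_{1,d+1}(t) = t·∏_{i=0}^{d-1}(t + [d-1-2i]) / [d+1]!`. -/
noncomputable def P1 (d : ℕ) : Polynomial (RatFunc ℚ) :=
  C (qfact (d + 1))⁻¹ *
    (X * ∏ i ∈ Finset.range d, (X + C (qint ((d : ℤ) - 1 - 2 * i))))

lemma v_ne_zero : v ≠ 0 := RatFunc.X_ne_zero

lemma v_pow_ne_one_s9 (n : ℕ) (hn : 0 < n) : v ^ n ≠ 1 := by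
  intro h
  have : (Polynomial.X : ℚ[X]) ^ n = 1 := by
    apply IsFractionRing.injective ℚ[X] (RatFunc ℚ)
    rw [map_pow, map_one, RatFunc.algebraMap_X]
    exact h
  have := congrArg Polynomial.natDegree this
  simp [Polynomial.natDegree_X_pow] at this
  omega

lemma qint_ne_zero (n : ℕ) (hn : 0 < n) : qint n ≠ 0 := by
  rw [qint]
  apply div_ne_zero
  · rw [sub_ne_zero]
    intro h
    have hne : v ^ (n : ℤ) ≠ 0 := zpow_ne_zero _ v_ne_zero
    have : v ^ (n : ℤ) * v ^ (n : ℤ) = 1 := by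
      nth_rewrite 2 [h]
      rw [zpow_neg, mul_inv_cancel₀ hne]
    have h2 : v ^ (2 * n) = 1 := by
      rw [← this, ← zpow_natCast]
      push_cast
      rw [← zpow_add₀ v_ne_zero]
      ring_nf
    exact v_pow_ne_one_s9 (2 * n) (by omega) h2
  · rw [sub_ne_zero]
    intro h
    have : v * v = 1 := by
      nth_rewrite 2 [h]
      rw [mul_inv_cancel₀ v_ne_zero]
    exact v_pow_ne_one_s9 2 (by omega) (by rw [pow_two]; exact this)

lemma qint_neg (m : ℤ) : qint (-m) = - qint m := by
  rw [qint, qint]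
  simp only [neg_neg]
  ring

lemma qfact_succ (n : ℕ) : qfact (n + 1) = qfact n * qint ((n : ℤ) + 1) := by
  rw [qfact, qfact, Finset.prod_range_succ]

lemma qfact_ne_zero (n : ℕ) : qfact n ≠ 0 := by
  rw [qfact]
  exact Finset.prod_ne_zero_iff.mpr fun i _ => by
    have := qint_ne_zero (i + 1) (by omega)
    simpa using this

theorem mult_rule_two (d : ℕ) :
    X * P1 d = C (qint ((d : ℤ) + 2)) * P0 (d + 2) + C (qint ((d : ℤ) + 1)) * P0 d := by
  have hprod : ∏ i ∈ Finset.range (d + 2), (X + C (qint (((d : ℕ) + 2 : ℕ) - 1 - 2 * i))) =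
      (X + C (qint ((d : ℤ) + 1))) * ((X - C (qint ((d : ℤ) + 1))) *
        ∏ i ∈ Finset.range d, (X + C (qint ((d : ℤ) - 1 - 2 * i)))) := by
    rw [Finset.prod_range_succ' (n := d + 1), Finset.prod_range_succ]
    have h0 : (((d : ℕ) + 2 : ℕ) : ℤ) - 1 - 2 * (0 : ℕ) = (d : ℤ) + 1 := by push_cast; ring
    have hd1 : (((d : ℕ) + 2 : ℕ) : ℤ) - 1 - 2 * ((d : ℕ) + 1 : ℕ) = -((d : ℤ) + 1) := by
      push_cast; ring
    rw [h0, hd1, qint_neg, map_neg]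
    rw [show ∀ a : Polynomial (RatFunc ℚ), X + -a = X - a from fun a => by ring]
    have hcongr : ∀ i ∈ Finset.range d,
        (X + C (qint ((((d : ℕ) + 2 : ℕ) : ℤ) - 1 - 2 * ((i + 1 : ℕ) : ℤ)))) =
        (X + C (qint ((d : ℤ) - 1 - 2 * i))) := by
      intro i _
      congr 2
      push_cast; ring
    rw [Finset.prod_congr rfl hcongr]
    ring
  have hne1 : qint ((d : ℤ) + 1) ≠ 0 := by
    have := qint_ne_zero (d + 1) (by omega); push_cast at this ⊢; exact this
  have hne2 : qint ((d : ℤ) + 2) ≠ 0 := by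
    have := qint_ne_zero (d + 2) (by omega); push_cast at this ⊢; exact this
  have hf1 : qfact (d + 1) = qfact d * qint ((d : ℤ) + 1) := qfact_succ d
  have hf2 : qfact (d + 2) = qfact (d + 1) * qint ((d : ℤ) + 2) := by
    have h := qfact_succ (d + 1)
    push_cast at h
    rw [show d + 1 + 1 = d + 2 from rfl] at h
    rw [show (d : ℤ) + 1 + 1 = (d : ℤ) + 2 from by ring] at h
    exact h
  have H1 : (qfact (d + 1))⁻¹ = qint ((d : ℤ) + 2) * (qfact (d + 2))⁻¹ := by
    rw [hf2, mul_inv, mul_comm (qfact (d + 1))⁻¹, ← mul_assoc, mul_inv_cancel₀ hne2, one_mul]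
  have H2 : qint ((d : ℤ) + 2) * (qfact (d + 2))⁻¹ * (qint ((d : ℤ) + 1))^2 =
      qint ((d : ℤ) + 1) * (qfact d)⁻¹ := by
    rw [hf2, hf1]
    field_simp [qfact_ne_zero d]
  have C1 := congrArg (C : RatFunc ℚ →+* _) H1
  have C2 := congrArg (C : RatFunc ℚ →+* _) H2
  simp only [map_mul, map_pow] at C1 C2
  rw [P1, P0, P0, hprod]
  linear_combination (X * X * ∏ i ∈ Finset.range d, (X + C (qint ((d : ℤ) - 1 - 2 * i)))) * C1
    + (∏ i ∈ Finset.range d, (X + C (qint ((d : ℤ) - 1 - 2 * i)))) * C2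
end
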